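/- First-order p = 2 expansion: with s2 = b1+b2-a1-a2-a3, Γ(a1+n)Γ(a2+n)Γ(a3+n)/(Γ(b1+n)Γ(b2+n)Γ(-s2+n)) = 1 + [(a1+s2)(a2+s2) - (b2-a3)(b1-a3)]/(1+s2-n) + O(n^{-2}) as n → ∞. -/

import Mathlib

/-!
Write `f n` for the Gamma ratio and `g n = 1 + κ / (1 + s₂ - n)` for the approximation.
By `Γ(x + 1) = x Γ(x)`, `f (n + 1) P_b(n) = f n P_a(n)` with
`P_a(x) = (a₁ + x)(a₂ + x)(a₃ + x)` and `P_b(x) = (b₁ + x)(b₂ + x)(x - s₂)`.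
The balancing condition defining `s₂` and the value of `κ` make `g` satisfy the same
recurrence up to a bounded defect, `g (n + 1) P_b(n) - g n P_a(n) = O(1)`, so the increments
of `g / f` are `O(n⁻³)`. Euler's limit formula gives `f n → 1`, and telescoping the
increments yields `g / f - 1 = O(n⁻²)`.
-/

open Filter Asymptotics Topology
open scoped Nat

theorem eventually_add_natCast_pos (c : ℝ) : ∀ᶠ n : ℕ in atTop, 0 < c + n := by
  filter_upwards [tendsto_natCast_atTop_atTop.eventually_gt_atTop (-c)] with n hn
  linarith

theorem isBigO_inv_const_add (c : ℝ) : (fun x : ℝ => (c + x)⁻¹) =O[atTop] fun x => x⁻¹ :=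
  ((isLittleO_const_id_atTop c).add_isEquivalent (IsEquivalent.refl (u := id))).inv.isBigO

theorem isBigO_quadratic (c₂ c₁ c₀ : ℝ) :
    (fun x : ℝ => c₂ * x ^ 2 + c₁ * x + c₀) =O[atTop] fun x => x ^ 2 := by
  have h1 : (fun x : ℝ => x) =O[atTop] fun x => x ^ 2 := by
    simpa using (isLittleO_pow_pow_atTop_of_lt (𝕜 := ℝ) (by norm_num : 1 < 2)).isBigO
  have h0 : (fun _ : ℝ => (1 : ℝ)) =O[atTop] fun x => x ^ 2 := by
    simpa using (isLittleO_pow_pow_atTop_of_lt (𝕜 := ℝ) (by norm_num : 0 < 2)).isBigO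
  simpa using (((isBigO_refl _ _).const_mul_left c₂).add (h1.const_mul_left c₁)).add
    (h0.const_mul_left c₀)

theorem abs_sub_le_of_abs_succ_sub_le {u v : ℕ → ℝ} {L : ℝ} {N : ℕ}
    (hu : Tendsto u atTop (𝓝 L)) (hv : Tendsto v atTop (𝓝 0))
    (hstep : ∀ n ≥ N, |u (n + 1) - u n| ≤ v n - v (n + 1)) {n : ℕ} (hn : N ≤ n) :
    |u n - L| ≤ v n := by
  have htel : ∀ m ≥ n, |u m - u n| ≤ v n - v m := by
    intro m hm
    induction m, hm using Nat.le_induction with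
    | base => simp
    | succ m hm ih =>
      calc |u (m + 1) - u n| ≤ |u (m + 1) - u m| + |u m - u n| := abs_sub_le _ _ _
        _ ≤ (v m - v (m + 1)) + (v n - v m) := add_le_add (hstep m (hn.trans hm)) ih
        _ = v n - v (m + 1) := by ring
  have hlim : Tendsto (fun m => |u m - u n|) atTop (𝓝 |L - u n|) :=
    (hu.sub_const _).abs
  rw [abs_sub_comm]
  simpa using le_of_tendsto_of_tendsto hlim (tendsto_const_nhds.sub hv)
    (eventually_atTop.2 ⟨n, htel⟩)

theorem isBigO_sub_of_tendsto_of_isBigO_succ_sub {u : ℕ → ℝ} {L : ℝ}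
    (hu : Tendsto u atTop (𝓝 L))
    (hstep : (fun n => u (n + 1) - u n) =O[atTop] fun n => (n : ℝ)⁻¹ ^ 3) :
    (fun n => u n - L) =O[atTop] fun n => (n : ℝ)⁻¹ ^ 2 := by
  obtain ⟨C, hC, hCw⟩ := hstep.exists_pos
  obtain ⟨N, hN⟩ := eventually_atTop.1 (hCw.bound.and (eventually_gt_atTop 0))
  have hv : Tendsto (fun n : ℕ => 2 * C * (n : ℝ)⁻¹ ^ 2) atTop (𝓝 0) := by
    simpa using (tendsto_inv_atTop_nhds_zero_nat.pow 2).const_mul (2 * C)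
  refine IsBigO.of_bound (2 * C) ?_
  filter_upwards [eventually_ge_atTop N] with n hn
  rw [Real.norm_eq_abs, Real.norm_of_nonneg (by positivity)]
  refine abs_sub_le_of_abs_succ_sub_le hu hv (fun m hm => ?_) hn
  obtain ⟨hbound, hm0⟩ := hN m hm
  have hm1 : (1 : ℝ) ≤ m := by exact_mod_cast hm0
  -- `1 / m³ ≤ 2 (1 / m² - 1 / (m + 1)²)` because `3 m² ≥ 1`.
  have hcube :
      (m : ℝ)⁻¹ ^ 3 ≤ 2 * ((m : ℝ)⁻¹ ^ 2 - ((m + 1 : ℕ) : ℝ)⁻¹ ^ 2) := by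
    push_cast
    rw [inv_pow, inv_pow, inv_pow, ← sub_nonneg]
    have hm : (0 : ℝ) < m := by linarith
    field_simp
    nlinarith
  rw [Real.norm_eq_abs, Real.norm_of_nonneg (by positivity)] at hbound
  calc |u (m + 1) - u m| ≤ C * (m : ℝ)⁻¹ ^ 3 := hbound
    _ ≤ C * (2 * ((m : ℝ)⁻¹ ^ 2 - ((m + 1 : ℕ) : ℝ)⁻¹ ^ 2)) := by gcongr
    _ = _ := by ring

namespace Real

theorem Gamma_add_nat_eq_mul_prod {x : ℝ} (n : ℕ) (hx : ∀ j < n, x + j ≠ 0) :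
    Gamma (x + n) = Gamma x * ∏ j ∈ Finset.range n, (x + j) := by
  induction n with
  | zero => simp
  | succ n ih =>
    rw [Finset.prod_range_succ, ← mul_assoc, ← ih fun j hj => hx j (by omega), Nat.cast_succ,
      ← add_assoc, Gamma_add_one (hx n n.lt_succ_self), mul_comm]

theorem tendsto_Gamma_add_nat_add_one_div_of_pos {x : ℝ} (hx : 0 < x) :
    Tendsto (fun n : ℕ => Gamma (x + n + 1) / (n ! * (n : ℝ) ^ x)) atTop (𝓝 1) := by
  have hΓ : Gamma x ≠ 0 := (Gamma_pos_of_pos hx).ne'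
  have h := tendsto_const_nhds (x := Gamma x) |>.div (GammaSeq_tendsto_Gamma x) hΓ
  rw [div_self hΓ] at h
  refine h.congr fun n => ?_
  rw [Pi.div_apply, GammaSeq, div_div_eq_mul_div, mul_comm ((n : ℝ) ^ x), add_assoc,
    ← Nat.cast_succ, Gamma_add_nat_eq_mul_prod _ fun j _ => by positivity]

theorem tendsto_Gamma_add_nat_add_one_div (x : ℝ) :
    Tendsto (fun n : ℕ => Gamma (x + n + 1) / (n ! * (n : ℝ) ^ x)) atTop (𝓝 1) := by
  obtain ⟨k, hk⟩ := exists_nat_gt (-x)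
  induction k generalizing x with
  | zero => exact tendsto_Gamma_add_nat_add_one_div_of_pos (by simpa using hk)
  | succ k ih =>
    have h := (ih (x + 1) (by push_cast at hk; linarith)).mul
      (tendsto_natCast_div_add_atTop (x + 1))
    rw [mul_one] at h
    refine h.congr' ?_
    filter_upwards [eventually_gt_atTop 0, eventually_add_natCast_pos (x + 1)] with n hn hxn
    have hn' : (n : ℝ) ≠ 0 := by positivity
    have hne : x + n + 1 ≠ 0 := by linarith
    have hne' : (n : ℝ) + (x + 1) ≠ 0 := by linarith
    rw [show x + 1 + n + 1 = (x + n + 1) + 1 by ring, Gamma_add_one hne, rpow_add_one hn']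
    field_simp
    ring

theorem tendsto_Gamma_add_nat_div_Gamma_add_nat_mul_rpow (a b : ℝ) :
    Tendsto (fun n : ℕ => Gamma (a + n) / Gamma (b + n) * (n : ℝ) ^ (b - a))
      atTop (𝓝 1) := by
  have h := (tendsto_Gamma_add_nat_add_one_div (a - 1)).div
    (tendsto_Gamma_add_nat_add_one_div (b - 1)) one_ne_zero
  rw [div_one] at h
  refine h.congr' ?_
  filter_upwards [eventually_gt_atTop 0] with n hn
  have hn' : (0 : ℝ) < n := by exact_mod_cast hn
  rw [Pi.div_apply, show a - 1 + n + 1 = a + n by ring, show b - 1 + n + 1 = b + n by ring,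
    show b - a = (b - 1) - (a - 1) by ring, rpow_sub hn' (b - 1) (a - 1)]
  field_simp

theorem Gamma_add_natCast_succ {c : ℝ} {n : ℕ} (h : c + n ≠ 0) :
    Gamma (c + (n + 1 : ℕ)) = (c + n) * Gamma (c + n) := by
  rw [Nat.cast_succ, ← add_assoc, Gamma_add_one h]

end Real

open Real

noncomputable def gammaRatio (a1 a2 a3 b1 b2 b3 : ℝ) (n : ℕ) : ℝ :=
  Gamma (a1 + n) * Gamma (a2 + n) * Gamma (a3 + n) /
    (Gamma (b1 + n) * Gamma (b2 + n) * Gamma (b3 + n))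

section gammaRatio

variable {a1 a2 a3 b1 b2 b3 : ℝ}

theorem tendsto_gammaRatio (h : a1 + a2 + a3 = b1 + b2 + b3) :
    Tendsto (gammaRatio a1 a2 a3 b1 b2 b3) atTop (𝓝 1) := by
  have hlim := ((tendsto_Gamma_add_nat_div_Gamma_add_nat_mul_rpow a1 b1).mul
    (tendsto_Gamma_add_nat_div_Gamma_add_nat_mul_rpow a2 b2)).mul
    (tendsto_Gamma_add_nat_div_Gamma_add_nat_mul_rpow a3 b3)
  rw [mul_one, mul_one] at hlim
  refine hlim.congr' ?_
  filter_upwards [eventually_gt_atTop 0] with n hn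
  have hn' : (0 : ℝ) < n := by exact_mod_cast hn
  have hpow : (n : ℝ) ^ (b1 - a1) * (n : ℝ) ^ (b2 - a2) * (n : ℝ) ^ (b3 - a3) = 1 := by
    rw [← rpow_add hn', ← rpow_add hn', show b1 - a1 + (b2 - a2) + (b3 - a3) = 0 by linarith,
      rpow_zero]
  calc _ = gammaRatio a1 a2 a3 b1 b2 b3 n *
        ((n : ℝ) ^ (b1 - a1) * (n : ℝ) ^ (b2 - a2) * (n : ℝ) ^ (b3 - a3)) := by
        simp only [gammaRatio]; ring
    _ = _ := by rw [hpow, mul_one]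

theorem eventually_gammaRatio_succ :
    ∀ᶠ n : ℕ in atTop,
      gammaRatio a1 a2 a3 b1 b2 b3 (n + 1) * ((b1 + n) * (b2 + n) * (b3 + n)) =
      gammaRatio a1 a2 a3 b1 b2 b3 n * ((a1 + n) * (a2 + n) * (a3 + n)) := by
  filter_upwards [eventually_add_natCast_pos a1, eventually_add_natCast_pos a2,
    eventually_add_natCast_pos a3, eventually_add_natCast_pos b1,
    eventually_add_natCast_pos b2, eventually_add_natCast_pos b3] with n ha1 ha2 ha3 hb1 hb2 hb3
  have hΓ1 := (Gamma_pos_of_pos hb1).ne'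
  have hΓ2 := (Gamma_pos_of_pos hb2).ne'
  have hΓ3 := (Gamma_pos_of_pos hb3).ne'
  simp only [gammaRatio]
  rw [Gamma_add_natCast_succ ha1.ne', Gamma_add_natCast_succ ha2.ne',
    Gamma_add_natCast_succ ha3.ne', Gamma_add_natCast_succ hb1.ne',
    Gamma_add_natCast_succ hb2.ne', Gamma_add_natCast_succ hb3.ne']
  field_simp

end gammaRatio

noncomputable def firstOrderApprox (a1 a2 a3 b1 b2 s2 x : ℝ) : ℝ :=
  1 + ((a1 + s2) * (a2 + s2) - (b2 - a3) * (b1 - a3)) / (1 + s2 - x)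

theorem tendsto_firstOrderApprox (a1 a2 a3 b1 b2 s2 : ℝ) :
    Tendsto (firstOrderApprox a1 a2 a3 b1 b2 s2) atTop (𝓝 1) := by
  have h : Tendsto (fun x : ℝ => 1 + s2 - x) atTop atBot := by
    simpa [sub_eq_add_neg] using tendsto_atBot_add_const_left _ (1 + s2) tendsto_neg_atTop_atBot
  have hlim := (tendsto_const_nhds (x := (1 : ℝ))).add
    ((tendsto_const_nhds (x := (a1 + s2) * (a2 + s2) - (b2 - a3) * (b1 - a3))).div_atBot h)
  rwa [add_zero] at hlim

noncomputable def recurrenceDefect (a1 a2 a3 b1 b2 s2 x : ℝ) : ℝ :=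
  firstOrderApprox a1 a2 a3 b1 b2 s2 (x + 1) * ((b1 + x) * (b2 + x) * (-s2 + x)) -
    firstOrderApprox a1 a2 a3 b1 b2 s2 x * ((a1 + x) * (a2 + x) * (a3 + x))

section recurrenceDefect

variable {a1 a2 a3 b1 b2 s2 : ℝ}

theorem exists_recurrenceDefect_mul_eq_quadratic (hs : s2 = b1 + b2 - a1 - a2 - a3) :
    ∃ c₂ c₁ c₀ : ℝ, ∀ x, s2 - x ≠ 0 → 1 + s2 - x ≠ 0 →
      recurrenceDefect a1 a2 a3 b1 b2 s2 x * ((s2 - x) * (1 + s2 - x)) =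
        c₂ * x ^ 2 + c₁ * x + c₀ := by
  set κ := (a1 + s2) * (a2 + s2) - (b2 - a3) * (b1 - a3)
  let M : ℝ → ℝ := fun x => (s2 - x + κ) * (1 + s2 - x) * ((b1 + x) * (b2 + x) * (-s2 + x)) -
    (1 + s2 - x + κ) * (s2 - x) * ((a1 + x) * (a2 + x) * (a3 + x))
  -- The coefficients of `x⁵, x⁴, x³` in `M` cancel (this is where `hs` and `κ` enter), so `M`
  -- agrees with its quadratic interpolant at `0, 1, 2`.
  have hM : ∀ x,
      M x = (M 2 - 2 * M 1 + M 0) / 2 * x ^ 2 + (4 * M 1 - M 2 - 3 * M 0) / 2 * x + M 0 := by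
    intro x
    simp only [M, κ]
    subst hs
    ring
  refine ⟨(M 2 - 2 * M 1 + M 0) / 2, (4 * M 1 - M 2 - 3 * M 0) / 2, M 0, fun x h1 h2 => ?_⟩
  rw [← hM]
  simp only [recurrenceDefect, firstOrderApprox, M]
  rw [show 1 + s2 - (x + 1) = s2 - x by ring]
  field_simp
  ring

theorem isBigO_recurrenceDefect (hs : s2 = b1 + b2 - a1 - a2 - a3) :
    recurrenceDefect a1 a2 a3 b1 b2 s2 =O[atTop] fun _ => (1 : ℝ) := by
  obtain ⟨c₂, c₁, c₀, hq⟩ := exists_recurrenceDefect_mul_eq_quadratic hs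
  refine ((isBigO_quadratic c₂ c₁ c₀).mul
    ((isBigO_inv_const_add (-s2)).mul (isBigO_inv_const_add (-1 - s2)))).congr' ?_ ?_
  · filter_upwards [eventually_gt_atTop (s2 + 1)] with x hx
    have h1 : -s2 + x ≠ 0 := by linarith
    have h2 : -1 - s2 + x ≠ 0 := by linarith
    rw [← hq x (by linarith) (by linarith)]
    field_simp
    ring
  · filter_upwards [eventually_ne_atTop 0] with x hx
    field_simp

end recurrenceDefect

theorem isBigO_firstOrderApprox_div_gammaRatio_succ_sub {a1 a2 a3 b1 b2 s2 : ℝ}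
    (hs : s2 = b1 + b2 - a1 - a2 - a3) :
    (fun n : ℕ => firstOrderApprox a1 a2 a3 b1 b2 s2 (n + 1 : ℕ) /
        gammaRatio a1 a2 a3 b1 b2 (-s2) (n + 1) -
      firstOrderApprox a1 a2 a3 b1 b2 s2 n / gammaRatio a1 a2 a3 b1 b2 (-s2) n) =O[atTop]
      fun n => (n : ℝ)⁻¹ ^ 3 := by
  set f := gammaRatio a1 a2 a3 b1 b2 (-s2)
  have hf : Tendsto f atTop (𝓝 1) := tendsto_gammaRatio (by linarith)
  have hf_ne : ∀ᶠ n in atTop, f n ≠ 0 := hf.eventually_ne one_ne_zero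
  have hPb :
      (fun x : ℝ => ((b1 + x) * (b2 + x) * (-s2 + x))⁻¹) =O[atTop] fun x => x⁻¹ ^ 3 :=
    (((isBigO_inv_const_add b1).mul (isBigO_inv_const_add b2)).mul
      (isBigO_inv_const_add (-s2))).congr (fun x => by rw [mul_inv, mul_inv]) (fun x => by ring)
  have hf_inv : (fun n => (f (n + 1))⁻¹) =O[atTop] fun _ => (1 : ℝ) :=
    ((hf.inv₀ one_ne_zero).comp (tendsto_add_atTop_nat 1)).isBigO_one ℝ
  refine ((((isBigO_recurrenceDefect hs).mul hPb).comp_tendsto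
    tendsto_natCast_atTop_atTop).mul hf_inv).congr' ?_ (.of_forall fun n => by simp)
  filter_upwards [eventually_gammaRatio_succ, hf_ne, (tendsto_add_atTop_nat 1).eventually hf_ne,
    eventually_add_natCast_pos b1, eventually_add_natCast_pos b2,
    eventually_add_natCast_pos (-s2)] with n hrec hfn hfn1 hb1 hb2 hb3
  simp only [Function.comp_apply, recurrenceDefect, Nat.cast_succ]
  field_simp
  linear_combination firstOrderApprox a1 a2 a3 b1 b2 s2 n * hrec

theorem gamma_ratio_first_order_p2 (a1 a2 a3 b1 b2 s2 : ℝ)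
    (hs : s2 = b1 + b2 - a1 - a2 - a3) :
    (fun n : ℕ =>
        Real.Gamma (a1 + n) * Real.Gamma (a2 + n) * Real.Gamma (a3 + n) /
            (Real.Gamma (b1 + n) * Real.Gamma (b2 + n) * Real.Gamma (-s2 + n)) -
          (1 + ((a1 + s2) * (a2 + s2) - (b2 - a3) * (b1 - a3)) / (1 + s2 - n))) =O[atTop]
      fun n : ℕ => ((n : ℝ))⁻¹ ^ 2 := by
  set f := gammaRatio a1 a2 a3 b1 b2 (-s2)
  set g : ℕ → ℝ := fun n => firstOrderApprox a1 a2 a3 b1 b2 s2 n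
  change (fun n => f n - g n) =O[atTop] _
  have hf : Tendsto f atTop (𝓝 1) := tendsto_gammaRatio (by linarith)
  have hg : Tendsto g atTop (𝓝 1) :=
    (tendsto_firstOrderApprox a1 a2 a3 b1 b2 s2).comp tendsto_natCast_atTop_atTop
  have hu := isBigO_sub_of_tendsto_of_isBigO_succ_sub (by simpa using hg.div hf one_ne_zero)
    (isBigO_firstOrderApprox_div_gammaRatio_succ_sub hs)
  refine ((hf.isBigO_one ℝ).mul hu).neg_left.congr' ?_ (.of_forall fun n => one_mul _)
  filter_upwards [hf.eventually_ne one_ne_zero] with n hn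
  simp only [Pi.div_apply]
  field_simp
  ring
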